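/- Let G = (V+, V-; E) be a DM-irreducible balanced bipartite graph with nonnegative edge weights w, let T be a minimum-weight strongly balanced spanning tree of G rooted at a vertex r ∈ V+, let M be the perfect matching contained in T, and let A_out be a minimum-weight spanning r-out-arborescence of the auxiliary digraph G_M with respect to the weight w_M (equal to w on non-matching arcs and 0 on matching arcs). Then the spanning subgraph T ∪ {underlying edges of A_out} of G is DM-irreducible and its total weight is at most twice the minimum weight of a DM-irreducible spanning subgraph of G. -/

import Mathlib

open Sum

/-- The simple graph on `α ⊕ β` determined by an edge set `T ⊆ α × β`. -/
def sg {α β : Type*} (T : Set (α × β)) : SimpleGraph (α ⊕ β) :=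
  SimpleGraph.fromRel (fun u v => ∃ a b, u = inl a ∧ v = inr b ∧ (a, b) ∈ T)

/-- Degree of `a ∈ V⁺` in the edge set `T`. -/
noncomputable def degP {α β : Type*} (T : Set (α × β)) (a : α) : ℕ :=
  {b : β | (a, b) ∈ T}.ncard

/-- Arc relation of the auxiliary digraph `G_M`. -/
def Step {α β : Type*} (E M : Set (α × β)) : (α ⊕ β) → (α ⊕ β) → Prop
  | inl a, inr b => (a, b) ∈ E
  | inr b, inl a => (a, b) ∈ M
  | _, _ => False

def auxArcs {α β : Type*} (E M : Set (α × β)) : Set ((α ⊕ β) × (α ⊕ β)) :=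
  {p | Step E M p.1 p.2}

def StronglyConnected {V : Type*} (R : V → V → Prop) : Prop :=
  ∀ u v : V, Relation.ReflTransGen R u v

def IsPerfectMatching {α β : Type*} (E M : Set (α × β)) : Prop :=
  M ⊆ E ∧ (∀ a : α, ∃! b : β, (a, b) ∈ M) ∧ (∀ b : β, ∃! a : α, (a, b) ∈ M)

def DMIrreducible {α β : Type*} (E : Set (α × β)) : Prop :=
  ∃ M, IsPerfectMatching E M ∧ StronglyConnected (Step E M)

def WeaklyConnected {V : Type*} (B : Set (V × V)) : Prop :=
  ∀ u v : V, Relation.ReflTransGen (fun x y => (x, y) ∈ B ∨ (y, x) ∈ B) u v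

/-- `B` is a spanning out-arborescence rooted at `r`. -/
def IsOutArb {V : Type*} (B : Set (V × V)) (r : V) : Prop :=
  WeaklyConnected B ∧ (¬ ∃ w, (w, r) ∈ B) ∧ ∀ v : V, v ≠ r → ∃! w, (w, v) ∈ B

/-- `T` is a strongly balanced spanning tree of `(V⁺, V⁻; E)` rooted at `r ∈ V⁺`. -/
def SBST {α β : Type*} (E T : Set (α × β)) (r : α) : Prop :=
  T ⊆ E ∧ (sg T).IsTree ∧ degP T r = 1 ∧ ∀ a : α, a ≠ r → degP T a = 2

/-- Total weight of an edge set. -/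
noncomputable def Wt {α β : Type*} (w : α × β → ℝ) (F : Set (α × β)) : ℝ :=
  ∑ᶠ p ∈ F, w p

/-- Weight `w_M` on arcs of the auxiliary digraph: `w` on forward arcs, `0` on the
reversed matching arcs. -/
def wAux {α β : Type*} (w : α × β → ℝ) : ((α ⊕ β) × (α ⊕ β)) → ℝ
  | (inl a, inr b) => w (a, b)
  | _ => 0

/-- Total `w_M`-weight of an arc set. -/
noncomputable def WtArc {α β : Type*} (w : α × β → ℝ) (B : Set ((α ⊕ β) × (α ⊕ β))) : ℝ :=
  ∑ᶠ p ∈ B, wAux w p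

/-- Underlying undirected edges of an arc set of the auxiliary digraph. -/
def und {α β : Type*} (B : Set ((α ⊕ β) × (α ⊕ β))) : Set (α × β) :=
  {p | (inl p.1, inr p.2) ∈ B ∨ (inr p.2, inl p.1) ∈ B}

/-!
`M` is also a perfect matching of `T ∪ und B`. The arborescence `B` reaches every vertex from
`r`; conversely every vertex reaches `r` in `T`, alternating matching arcs and non-matching tree
edges: a vertex `a ≠ r` has exactly one non-matching tree edge, so reachability of `r` is constant
along tree edges, hence on the whole (connected) tree.

For the bound, let `F ⊆ E` be DM-irreducible. Contracting the edges of a perfect matching of `F`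
gives a digraph on `V⁺` in which every vertex reaches `r`; a shortest-path parent map in it, added
to the matching, is a strongly balanced spanning tree inside `F`, so `w(T) ≤ w(F)`. Strong
connectivity of `F` with a perfect matching reversed does not depend on which perfect matching is
reversed (both match the set reachable from `r` onto sets of equal size, one inside the other), so
`F` with `M` reversed contains a spanning `r`-out-arborescence and `w_M(B) ≤ w(F)`. Finally the
backward arcs of `B` are matching edges, already in `T`, so `w(T ∪ und B) ≤ w(T) + w_M(B)`.
-/

namespace Relation

variable {V : Type*} {R : V → V → Prop} {r : V}

def ReachesIn (R : V → V → Prop) (r : V) : ℕ → V → Prop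
  | 0, v => v = r
  | n + 1, v => ∃ u, R v u ∧ ReachesIn R r n u

lemma exists_reachesIn_of_reflTransGen {v : V} (h : ReflTransGen R v r) :
    ∃ n, ReachesIn R r n v := by
  induction h using ReflTransGen.head_induction_on with
  | refl => exact ⟨0, rfl⟩
  | head hstep _ ih =>
    obtain ⟨n, hn⟩ := ih
    exact ⟨n + 1, _, hstep, hn⟩

-- `d v` is the length of a shortest path from `v` to `r`.
lemma exists_parent_of_forall_reflTransGen (h : ∀ v, ReflTransGen R v r) :
    ∃ (par : V → V) (d : V → ℕ), ∀ v, v ≠ r → R v (par v) ∧ d (par v) < d v := by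
  classical
  have hex := fun v => exists_reachesIn_of_reflTransGen (h v)
  have hstep : ∀ v, v ≠ r → ∃ u, R v u ∧ Nat.find (hex u) < Nat.find (hex v) := by
    intro v hv
    obtain ⟨n, hn⟩ : ∃ n, Nat.find (hex v) = n + 1 :=
      Nat.exists_eq_succ_of_ne_zero fun h0 => hv <| by
        simpa [h0, ReachesIn] using Nat.find_spec (hex v)
    have hspec := Nat.find_spec (hex v)
    rw [hn] at hspec ⊢
    obtain ⟨u, hvu, hu⟩ := hspec
    exact ⟨u, hvu, Nat.lt_succ_of_le (Nat.find_min' _ hu)⟩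
  choose! par hpar using hstep
  exact ⟨par, fun v => Nat.find (hex v), hpar⟩

lemma reflTransGen_of_parent {S : V → V → Prop} (par : V → V) (d : V → ℕ)
    (hpar : ∀ v, v ≠ r → S v (par v) ∧ d (par v) < d v) (v : V) : ReflTransGen S v r := by
  induction hd : d v using Nat.strong_induction_on generalizing v with
  | _ n ih =>
    by_cases hv : v = r
    · exact hv ▸ .refl
    · exact .head (hpar v hv).1 (ih _ (hd ▸ (hpar v hv).2) _ rfl)

end Relation

section Digraph

open Relation

lemma exists_isOutArb_subset {V : Type*} {R : V → V → Prop} {r : V}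
    (h : ∀ v, ReflTransGen R r v) : ∃ B ⊆ {p : V × V | R p.1 p.2}, IsOutArb B r := by
  obtain ⟨par, d, hpar⟩ := exists_parent_of_forall_reflTransGen (R := flip R) (r := r)
    fun v => (h v).swap
  set B : Set (V × V) := {p | p.2 ≠ r ∧ p.1 = par p.2}
  refine ⟨B, fun ⟨u, v⟩ ⟨hv, (hu : u = par v)⟩ => hu ▸ (hpar v hv).1, ?_,
    fun ⟨_, hr, _⟩ => hr rfl, fun v hv => ⟨par v, ⟨hv, rfl⟩, fun _ h => h.2⟩⟩
  have hroot : ∀ v, ReflTransGen (fun x y => (x, y) ∈ B ∨ (y, x) ∈ B) v r :=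
    reflTransGen_of_parent par d fun v hv => ⟨Or.inr ⟨hv, rfl⟩, (hpar v hv).2⟩
  exact fun u v => (hroot u).trans (ReflTransGen.mono (fun _ _ => Or.symm) _ _ (hroot v).swap)

lemma IsOutArb.reflTransGen_root {V : Type*} {B : Set (V × V)} {r : V} (hB : IsOutArb B r)
    (v : V) : ReflTransGen (fun x y => (x, y) ∈ B) r v := by
  obtain ⟨hconn, hroot, hin⟩ := hB
  induction hconn r v with
  | refl => exact .refl
  | @tail x y _ hxy ih =>
    rcases hxy with hxy | hyx
    · exact ih.tail hxy
    -- the arc `y → x` must be the unique arc entering `x`, which `ih` already reaches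
    have hx : x ≠ r := by rintro rfl; exact hroot ⟨y, hyx⟩
    obtain ⟨u, hu, hux⟩ := (ih.cases_tail).resolve_left hx
    obtain ⟨_, -, huniq⟩ := hin x hx
    rwa [huniq y hyx, ← huniq u hux]

end Digraph

namespace SimpleGraph

variable {V : Type*} {G : SimpleGraph V}

lemma Connected.iff_of_adj_iff (hG : G.Connected) {P : V → Prop}
    (hP : ∀ u v, G.Adj u v → (P u ↔ P v)) (u v : V) : P u ↔ P v := by
  have h := (reachable_iff_reflTransGen u v).mp (hG u v)
  induction h with
  | refl => rfl
  | tail _ huv ih => exact ih.trans (hP _ _ huv)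

lemma isTree_of_parent [Finite V] (root : V) (par : V → V) (d : V → ℕ)
    (hd : ∀ v, v ≠ root → d (par v) < d v)
    (hadj : ∀ u v, G.Adj u v ↔ (u ≠ root ∧ par u = v) ∨ (v ≠ root ∧ par v = u)) :
    G.IsTree := by
  have hparAdj : ∀ v, v ≠ root → G.Adj v (par v) := fun v hv =>
    (hadj _ _).2 (.inl ⟨hv, rfl⟩)
  have hroot : ∀ v, G.Reachable v root := fun v =>
    (reachable_iff_reflTransGen v root).2 <|
      Relation.reflTransGen_of_parent par d (fun v hv => ⟨hparAdj v hv, hd v hv⟩) v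
  have : Nonempty V := ⟨root⟩
  refine isTree_iff_connected_and_card.2 ⟨⟨fun u v => (hroot u).trans (hroot v).symm⟩, ?_⟩
  let link : {v // v ≠ root} → G.edgeSet := fun v => ⟨s(v, par v), hparAdj v v.2⟩
  have hlink : Function.Bijective link := by
    constructor
    · rintro ⟨u, hu⟩ ⟨v, hv⟩ huv
      have huv : s(u, par u) = s(v, par v) := congrArg Subtype.val huv
      rcases Sym2.eq_iff.1 huv with ⟨h, -⟩ | ⟨rfl, h⟩
      · exact Subtype.ext h
      · exact absurd (h ▸ (hd _ hu).trans (hd _ hv)) (lt_irrefl _)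
    · rintro ⟨e, he⟩
      induction e using Sym2.ind with
      | _ u v =>
      rcases (hadj u v).1 he with ⟨hu, rfl⟩ | ⟨hv, rfl⟩
      · exact ⟨⟨u, hu⟩, rfl⟩
      · exact ⟨⟨v, hv⟩, Subtype.ext Sym2.eq_swap⟩
  rw [← Nat.card_congr (Equiv.ofBijective link hlink)]
  have := Fintype.ofFinite V
  classical
  simp only [ne_eq, Nat.card_eq_fintype_card, Fintype.card_subtype_compl, Fintype.card_unique]
  exact Nat.sub_add_cancel Fintype.card_pos

end SimpleGraph

lemma Set.eq_of_mem_of_ncard_eq_two {γ : Type*} {s : Set γ} (hs : s.ncard = 2) {c x y : γ}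
    (hc : c ∈ s) (hx : x ∈ s) (hy : y ∈ s) (hxc : x ≠ c) (hyc : y ≠ c) : x = y := by
  obtain ⟨u, v, -, rfl⟩ := Set.ncard_eq_two.1 hs
  simp only [Set.mem_insert_iff, Set.mem_singleton_iff] at hc hx hy
  grind

section Bipartite

open Relation

variable {α β : Type*}

namespace IsPerfectMatching

variable {E M : Set (α × β)}

noncomputable def toEquiv (hM : IsPerfectMatching E M) : α ≃ β where
  toFun a := (hM.2.1 a).choose
  invFun b := (hM.2.2 b).choose
  left_inv a := ((hM.2.2 _).choose_spec.2 a (hM.2.1 a).choose_spec.1).symm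
  right_inv b := ((hM.2.1 _).choose_spec.2 b (hM.2.2 b).choose_spec.1).symm

lemma mem_iff (hM : IsPerfectMatching E M) {a : α} {b : β} : (a, b) ∈ M ↔ hM.toEquiv a = b :=
  ⟨fun h => ((hM.2.1 a).choose_spec.2 b h).symm, fun h => h ▸ (hM.2.1 a).choose_spec.1⟩

lemma mem_iff_symm (hM : IsPerfectMatching E M) {a : α} {b : β} :
    (a, b) ∈ M ↔ hM.toEquiv.symm b = a := by
  rw [mem_iff, Equiv.symm_apply_eq, eq_comm]

lemma mono (hM : IsPerfectMatching E M) {F : Set (α × β)} (hMF : M ⊆ F) :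
    IsPerfectMatching F M :=
  ⟨hMF, hM.2⟩

end IsPerfectMatching

@[simp] lemma sg_adj_inl_inr {T : Set (α × β)} {a : α} {b : β} :
    (sg T).Adj (inl a) (inr b) ↔ (a, b) ∈ T := by
  simp [sg]

@[simp] lemma sg_adj_inr_inl {T : Set (α × β)} {a : α} {b : β} :
    (sg T).Adj (inr b) (inl a) ↔ (a, b) ∈ T := by
  simp [sg]

@[simp] lemma sg_not_adj_inl_inl {T : Set (α × β)} {a a' : α} :
    ¬ (sg T).Adj (inl a) (inl a') := by
  simp [sg]

@[simp] lemma sg_not_adj_inr_inr {T : Set (α × β)} {b b' : β} :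
    ¬ (sg T).Adj (inr b) (inr b') := by
  simp [sg]

@[simp] lemma step_inl_inr {E M : Set (α × β)} {a : α} {b : β} :
    Step E M (inl a) (inr b) ↔ (a, b) ∈ E := Iff.rfl

lemma step_mono {E F M : Set (α × β)} (h : F ⊆ E) {u v : α ⊕ β} (huv : Step F M u v) :
    Step E M u v := by
  rcases u with a | b <;> rcases v with a' | b'
  exacts [huv, h huv, huv, huv]

/-- The digraph on `V⁺` obtained from `G_M` (forward arcs `F`) by contracting every reversed
matching arc `e a → a`. -/
def ContractedStep (F : Set (α × β)) (e : α ≃ β) (a a' : α) : Prop :=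
  (a, e a') ∈ F

variable {E F M : Set (α × β)}

lemma reflTransGen_step_of_contractedStep (hM : IsPerfectMatching E M) {a a' : α}
    (h : ReflTransGen (ContractedStep F hM.toEquiv) a a') :
    ReflTransGen (Step F M) (inl a) (inl a') :=
  ReflTransGen.lift' inl (fun _ c hac =>
    .tail (.single (b := inr (hM.toEquiv c)) hac) (hM.mem_iff.2 rfl)) _ _ h

lemma DMIrreducible.reflTransGen_contractedStep [Finite α] (hF : DMIrreducible F)
    (hM : IsPerfectMatching E M) (r a : α) :
    ReflTransGen (ContractedStep F hM.toEquiv) r a := by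
  obtain ⟨MF, hMF, hSC⟩ := hF
  set e := hM.toEquiv
  set eF := hMF.toEquiv
  set Rb : Set α := {a | ReflTransGen (ContractedStep F e) r a}
  -- `e '' Rb` contains `eF '' Rb` and has the same size, so no `MF`-arc leaves the image of `Rb`
  have hsub : eF '' Rb ⊆ e '' Rb := by
    rintro _ ⟨a, ha, rfl⟩
    refine ⟨e.symm (eF a), ha.tail ?_, e.apply_symm_apply _⟩
    simpa [ContractedStep] using hMF.1 (hMF.mem_iff.2 rfl)
  have himage : eF '' Rb = e '' Rb :=
    Set.eq_of_subset_of_ncard_le hsub (by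
      rw [Set.ncard_image_of_injective _ e.injective, Set.ncard_image_of_injective _ eF.injective])
  let S : α ⊕ β → Prop := Sum.elim (· ∈ Rb) (fun b => e.symm b ∈ Rb)
  have hS : ∀ u v, Step F MF u v → S u → S v := by
    rintro (a | b) (a' | b') huv hu
    · exact huv.elim
    · exact ReflTransGen.tail hu (by simpa [ContractedStep] using huv)
    · obtain ⟨a'', ha'', hb⟩ : b ∈ eF '' Rb :=
        himage ▸ ⟨e.symm b, hu, e.apply_symm_apply b⟩
      obtain rfl : eF a' = b := hMF.mem_iff.1 huv
      exact eF.injective hb ▸ ha''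
    · exact huv.elim
  have hreach : ∀ v, ReflTransGen (Step F MF) (inl r) v → S v := by
    intro v hv
    induction hv with
    | refl => exact ReflTransGen.refl
    | tail _ hstep ih => exact hS _ _ hstep ih
  exact hreach (inl a) (hSC _ _)

lemma DMIrreducible.stronglyConnected_step [Finite α] (hF : DMIrreducible F)
    (hM : IsPerfectMatching E M) : StronglyConnected (Step F M) := by
  obtain ⟨MF, hMF, -⟩ := id hF
  have hinl : ∀ a a', ReflTransGen (Step F M) (inl a) (inl a') := fun a a' =>
    reflTransGen_step_of_contractedStep hM (hF.reflTransGen_contractedStep hM a a')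
  have hto : ∀ b a, ReflTransGen (Step F M) (inr b) (inl a) := fun b a =>
    .head (b := inl (hM.toEquiv.symm b)) (hM.mem_iff_symm.2 rfl) (hinl _ a)
  have hfrom : ∀ a b, ReflTransGen (Step F M) (inl a) (inr b) := fun a b =>
    (hinl a _).tail (show (hMF.toEquiv.symm b, b) ∈ F from hMF.1 (hMF.mem_iff_symm.2 rfl))
  rintro (a | b) (a' | b')
  exacts [hinl a a', hfrom a b', hto b a', (hto b (hM.toEquiv.symm b')).trans (hfrom _ b')]

lemma DMIrreducible.exists_SBST_subset [Finite α] [Finite β] (hF : DMIrreducible F)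
    (hFE : F ⊆ E) (r : α) : ∃ T ⊆ F, SBST E T r := by
  obtain ⟨MF, hMF, -⟩ := id hF
  set e := hMF.toEquiv
  obtain ⟨g, d, hg⟩ := exists_parent_of_forall_reflTransGen
    (hF.reflTransGen_contractedStep hMF · r)
  have hgne : ∀ a, a ≠ r → g a ≠ a := fun a ha h => by simpa [h] using (hg a ha).2
  set T : Set (α × β) := MF ∪ {p | p.1 ≠ r ∧ p.2 = e (g p.1)}
  have memT : ∀ a b, (a, b) ∈ T ↔ e a = b ∨ (a ≠ r ∧ b = e (g a)) := fun a b => by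
    simp [T, e, hMF.mem_iff]
  have hTF : T ⊆ F := by
    rintro ⟨a, b⟩ hab
    rcases (memT a b).1 hab with rfl | ⟨ha, rfl⟩
    exacts [hMF.1 (hMF.mem_iff.2 rfl), (hg a ha).1]
  refine ⟨T, hTF, hTF.trans hFE, ?_, ?_, fun a ha => ?_⟩
  · refine SimpleGraph.isTree_of_parent (inl r)
      (Sum.elim (fun a => inr (e (g a))) (fun b => inl (e.symm b)))
      (Sum.elim (2 * d ·) (fun b => 2 * d (e.symm b) + 1)) ?_ ?_
    · rintro (a | b) hne
      · have := (hg a (by simpa using hne)).2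
        simp only [Sum.elim_inl, Sum.elim_inr, Equiv.symm_apply_apply]
        omega
      · simp
    · rintro (a | b) (a' | b') <;> simp [memT, Equiv.symm_apply_eq] <;> grind
  · have : {b | (r, b) ∈ T} = {e r} := by ext b; simp [memT, eq_comm]
    rw [degP, this, Set.ncard_singleton]
  · have : {b | (a, b) ∈ T} = {e a, e (g a)} := by ext b; simp [memT, ha, eq_comm]
    rw [degP, this, Set.ncard_pair (e.injective.ne (hgne a ha).symm)]

lemma SBST.reflTransGen_step_root [Finite β] {T : Set (α × β)} {r : α} (hT : SBST E T r)
    (hM : IsPerfectMatching E M) (hMT : M ⊆ T) (v : α ⊕ β) :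
    ReflTransGen (Step T M) v (inl r) := by
  set e := hM.toEquiv
  have hMT' : ∀ a, (a, e a) ∈ T := fun a => hMT (hM.mem_iff.2 rfl)
  let P : α → Prop := fun a => ReflTransGen (ContractedStep (T \ M) e) a r
  -- a vertex `a ≠ r` has exactly one non-matching tree edge, so a path from `a` leaves through it
  have hedge : ∀ a b, (a, b) ∈ T → (P a ↔ P (e.symm b)) := by
    intro a b hab
    by_cases hm : (a, b) ∈ M
    · rw [hM.mem_iff_symm.1 hm]
    have hstep : ContractedStep (T \ M) e a (e.symm b) := by
      simpa [ContractedStep] using And.intro hab hm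
    refine ⟨fun ha => ?_, fun hb => hb.head hstep⟩
    have har : a ≠ r := by
      rintro rfl
      have hb : b = e a := (Set.ncard_le_one_iff (Set.toFinite _)).1 hT.2.2.1.le hab (hMT' a)
      exact hm (hM.mem_iff.2 hb.symm)
    obtain ⟨a', ⟨ha'T, ha'M⟩, ha'⟩ := ha.cases_head.resolve_left har
    have : e a' = b := Set.eq_of_mem_of_ncard_eq_two (hT.2.2.2 a har) (hMT' a) ha'T hab
      (fun h => ha'M (hM.mem_iff.2 h.symm)) (fun h => hm (hM.mem_iff.2 h.symm))
    rwa [← this, e.symm_apply_apply]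
  have hall : ∀ a, P a := by
    have hP := hT.2.1.connected.iff_of_adj_iff (P := fun v => P (v.elim id e.symm)) (by
      rintro (a | b) (a' | b') h <;> simp at h
      exacts [hedge _ _ h, (hedge _ _ h).symm])
    exact fun a => (hP (inl a) (inl r)).2 .refl
  have hinl : ∀ a, ReflTransGen (Step T M) (inl a) (inl r) := fun a =>
    reflTransGen_step_of_contractedStep hM
      (ReflTransGen.mono (fun _ _ h => Set.sdiff_subset h) _ _ (hall a))
  rcases v with a | b
  exacts [hinl a, .head (b := inl (e.symm b)) (hM.mem_iff_symm.2 rfl) (hinl _)]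

lemma SBST.dmIrreducible_union_und [Finite β] {T : Set (α × β)} {r : α}
    {B : Set ((α ⊕ β) × (α ⊕ β))} (hT : SBST E T r) (hM : IsPerfectMatching E M)
    (hMT : M ⊆ T) (hB : B ⊆ auxArcs E M) (hBarb : IsOutArb B (inl r)) :
    DMIrreducible (T ∪ und B) := by
  have hBstep : ∀ x y, (x, y) ∈ B → Step (T ∪ und B) M x y := by
    rintro (a | b) (a' | b') hxy
    exacts [(hB hxy).elim, Or.inr (Or.inl hxy), hB hxy, (hB hxy).elim]
  refine ⟨M, hM.mono (hMT.trans Set.subset_union_left), fun u v => ?_⟩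
  have hto := hT.reflTransGen_step_root hM hMT u
  exact (ReflTransGen.mono (fun _ _ => step_mono Set.subset_union_left) _ _ hto).trans
    (ReflTransGen.mono hBstep _ _ (hBarb.reflTransGen_root v))

section Weight

variable {w : α × β → ℝ}

lemma Wt_nonneg (hw : ∀ e, 0 ≤ w e) (F : Set (α × β)) : 0 ≤ Wt w F :=
  finsum_mem_induction (0 ≤ ·) le_rfl (fun _ _ => add_nonneg) fun p _ => hw p

variable [Finite α] [Finite β]

lemma Wt_mono (hw : ∀ e, 0 ≤ w e) {F F' : Set (α × β)} (h : F ⊆ F') :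
    Wt w F ≤ Wt w F' := by
  rw [Wt, Wt, ← Set.union_sdiff_cancel h,
    finsum_mem_union Set.disjoint_sdiff_right F.toFinite (Set.toFinite _)]
  exact le_add_of_nonneg_right (Wt_nonneg hw _)

lemma Wt_union_le (hw : ∀ e, 0 ≤ w e) (F F' : Set (α × β)) :
    Wt w (F ∪ F') ≤ Wt w F + Wt w F' := by
  have h := finsum_mem_union_inter (f := w) F.toFinite F'.toFinite
  have := Wt_nonneg hw (F ∩ F')
  rw [Wt, Wt, Wt] at *
  linarith

end Weight

def fwd (B : Set ((α ⊕ β) × (α ⊕ β))) : Set (α × β) :=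
  {p | (inl p.1, inr p.2) ∈ B}

lemma WtArc_eq_Wt_fwd (w : α × β → ℝ) (B : Set ((α ⊕ β) × (α ⊕ β))) :
    WtArc w B = Wt w (fwd B) := by
  have hinj :
      Set.InjOn (fun p : α × β => ((inl p.1 : α ⊕ β), (inr p.2 : α ⊕ β))) (fwd B) :=
    fun p _ q _ h => by simpa [Prod.ext_iff] using h
  refine (finsum_mem_inter_support_eq' _ _ _ ?_).trans (finsum_mem_image (f := wAux w) hinj)
  rintro ⟨a | b, a' | b'⟩ h <;> simp [wAux, fwd] at h ⊢

lemma und_subset_union_fwd {B : Set ((α ⊕ β) × (α ⊕ β))} {T : Set (α × β)}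
    (hB : B ⊆ auxArcs E M) (hMT : M ⊆ T) : und B ⊆ T ∪ fwd B := by
  rintro ⟨a, b⟩ (h | h)
  exacts [Or.inr h, Or.inl (hMT (hB h))]

lemma fwd_subset {B : Set ((α ⊕ β) × (α ⊕ β))} (hB : B ⊆ auxArcs F M) : fwd B ⊆ F :=
  fun _ h => hB h

lemma auxArcs_mono (h : F ⊆ E) : auxArcs F M ⊆ auxArcs E M :=
  fun _ => step_mono h

end Bipartite

theorem stmt17_general {α β : Type*} [Fintype α] [Fintype β]
    (E : Set (α × β))
    (w : α × β → ℝ) (hw : ∀ e, 0 ≤ w e) (r : α)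
    (T : Set (α × β)) (hT : SBST E T r)
    (hTmin : ∀ T' : Set (α × β), SBST E T' r → Wt w T ≤ Wt w T')
    (M : Set (α × β)) (hM : IsPerfectMatching E M) (hMT : M ⊆ T)
    (B : Set ((α ⊕ β) × (α ⊕ β))) (hB : B ⊆ auxArcs E M) (hBarb : IsOutArb B (inl r))
    (hBmin : ∀ B' : Set ((α ⊕ β) × (α ⊕ β)),
      B' ⊆ auxArcs E M → IsOutArb B' (inl r) → WtArc w B ≤ WtArc w B') :
    DMIrreducible (T ∪ und B) ∧
      ∀ F : Set (α × β), F ⊆ E → DMIrreducible F →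
        Wt w (T ∪ und B) ≤ 2 * Wt w F := by
  refine ⟨hT.dmIrreducible_union_und hM hMT hB hBarb, fun F hFE hF => ?_⟩
  obtain ⟨T', hT'F, hT'⟩ := hF.exists_SBST_subset hFE r
  obtain ⟨B', hB'F, hB'⟩ := exists_isOutArb_subset (hF.stronglyConnected_step hM (inl r))
  have hT_le : Wt w T ≤ Wt w F := (hTmin T' hT').trans (Wt_mono hw hT'F)
  have hB_le : WtArc w B ≤ Wt w F := by
    refine (hBmin B' (hB'F.trans (auxArcs_mono hFE)) hB').trans ?_
    rw [WtArc_eq_Wt_fwd]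
    exact Wt_mono hw (fwd_subset hB'F)
  calc Wt w (T ∪ und B)
      ≤ Wt w (T ∪ fwd B) := Wt_mono hw (Set.union_subset Set.subset_union_left
        (und_subset_union_fwd hB hMT))
    _ ≤ Wt w T + WtArc w B := WtArc_eq_Wt_fwd w B ▸ Wt_union_le hw T (fwd B)
    _ ≤ 2 * Wt w F := by linarith

theorem stmt17 {α β : Type*} [Fintype α] [Fintype β]
    (hbal : Fintype.card α = Fintype.card β)
    (E : Set (α × β)) (hDM : DMIrreducible E)
    (w : α × β → ℝ) (hw : ∀ e, 0 ≤ w e) (r : α)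
    (T : Set (α × β)) (hT : SBST E T r)
    (hTmin : ∀ T' : Set (α × β), SBST E T' r → Wt w T ≤ Wt w T')
    (M : Set (α × β)) (hM : IsPerfectMatching E M) (hMT : M ⊆ T)
    (B : Set ((α ⊕ β) × (α ⊕ β))) (hB : B ⊆ auxArcs E M) (hBarb : IsOutArb B (inl r))
    (hBmin : ∀ B' : Set ((α ⊕ β) × (α ⊕ β)),
      B' ⊆ auxArcs E M → IsOutArb B' (inl r) → WtArc w B ≤ WtArc w B') :
    DMIrreducible (T ∪ und B) ∧
      ∀ F : Set (α × β), F ⊆ E → DMIrreducible F →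
        Wt w (T ∪ und B) ≤ 2 * Wt w F :=
  stmt17_general E w hw r T hT hTmin M hM hMT B hB hBarb hBmin
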